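/- Let A ∈ ℂ^{m×d} have full column rank and let x ∈ ℂ^d be nonzero. Define V_x as the set of λ ∈ ℝ^{|N(Ax)|} (indexed by the support N(Ax) of Ax) for which the linear system Ay = D·λ has a solution y ∈ ℂ^d, where D is the m×|N(Ax)| matrix whose columns are the columns of dg(sign(Ax)) indexed by N(Ax). Then V_x is a real linear subspace containing the vector (|Ax|)restricted to N(Ax), and x ∈ W_A if and only if dim_ℝ V_x = 1. -/

import Mathlib

attribute [local instance] Classical.propDecidable

noncomputable def csign (z : ℂ) : ℂ := if z = 0 then 0 else z / (‖z‖ : ℂ)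

def Wset {m d : ℕ} (B : Matrix (Fin m) (Fin d) ℂ) : Set (Fin d → ℂ) :=
  {x | ∀ y : Fin d → ℂ,
    (∀ j, csign (B.mulVec y j) = csign (B.mulVec x j)) →
      ∃ t : ℝ, 0 < t ∧ x = fun k => (t : ℂ) * y k}

/-- `V_x`: the set of real vectors `λ`, indexed by the support of `Ax`, such that
`A y = dg(sign(Ax))_{N(Ax)} · λ` has a solution `y`. -/
def Vset {m d : ℕ} (A : Matrix (Fin m) (Fin d) ℂ) (x : Fin d → ℂ) :
    Set ({j : Fin m // A.mulVec x j ≠ 0} → ℝ) :=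
  {lam | ∃ y : Fin d → ℂ, ∀ j : Fin m,
    A.mulVec y j =
      if h : A.mulVec x j ≠ 0 then csign (A.mulVec x j) * (lam ⟨j, h⟩ : ℂ) else 0}

/-!
Write `D` for the real-linear map `λ ↦ dg(sign(Ax))_{N(Ax)} λ`, so that `V_x` is the preimage
under `D` of the range of `A` and `D |Ax| = Ax`. Any `λ ∈ V_x` becomes a positive vector after
adding a large multiple of `|Ax|`; a solution `y` of `Ay = Dλ` for such a positive `λ` has the
sign pattern of `Ax`. So if `x ∈ W_A`, then `x` is a positive multiple of `y`, and injectivity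
of `D` makes `λ` a multiple of `|Ax|`. Conversely, if `sign(Ay) = sign(Ax)` then `Ay = D |Ay|`,
so `|Ay| ∈ V_x`; when `V_x` is a line, `|Ay| = c |Ax|` with `c > 0`, whence `Ay = A(cx)` and,
`A` being injective, `y = cx`.
-/

open Matrix

lemma csign_eq_ofReal_mul (z : ℂ) : csign z = ((‖z‖⁻¹ : ℝ) : ℂ) * z := by
  unfold csign
  split_ifs with h
  · simp [h]
  · push_cast
    ring

lemma csign_eq_zero_iff {z : ℂ} : csign z = 0 ↔ z = 0 := by
  simp [csign_eq_ofReal_mul]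

lemma csign_mul_norm (z : ℂ) : csign z * (‖z‖ : ℂ) = z := by
  rcases eq_or_ne z 0 with rfl | h
  · simp [csign]
  · rw [csign_eq_ofReal_mul, mul_right_comm, ← Complex.ofReal_mul,
      inv_mul_cancel₀ (norm_ne_zero_iff.2 h), Complex.ofReal_one, one_mul]

lemma csign_ofReal_mul {r : ℝ} (hr : 0 < r) (z : ℂ) : csign (r * z) = csign z := by
  rw [csign_eq_ofReal_mul, csign_eq_ofReal_mul, norm_mul, Complex.norm_real,
    Real.norm_of_nonneg hr.le, mul_inv, Complex.ofReal_mul, Complex.ofReal_inv]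
  field_simp [show (r : ℂ) ≠ 0 by exact_mod_cast hr.ne']

lemma csign_csign (z : ℂ) : csign (csign z) = csign z := by
  rcases eq_or_ne z 0 with rfl | h
  · simp [csign]
  · conv_lhs => rw [csign_eq_ofReal_mul z]
    exact csign_ofReal_mul (inv_pos.2 (norm_pos_iff.2 h)) z

lemma Matrix.mulVec_injective_of_rank_eq {K : Type*} [Field K] {m n : Type*} [Fintype m]
    [Fintype n] {A : Matrix m n K} (hA : A.rank = Fintype.card n) :
    Function.Injective A.mulVec := by
  have h := LinearMap.finrank_range_add_finrank_ker A.mulVecLin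
  rwa [Module.finrank_fintype_fun_eq_card, ← Matrix.rank, hA, add_eq_left,
    Submodule.finrank_eq_zero, LinearMap.ker_eq_bot] at h

lemma exists_forall_pos_add_mul {ι : Type*} [Finite ι] (lam mu : ι → ℝ)
    (hmu : ∀ i, 0 < mu i) : ∃ t : ℝ, ∀ i, 0 < lam i + t * mu i := by
  refine (Filter.eventually_all.2 fun i => ?_).exists (f := Filter.atTop)
  exact (Filter.tendsto_atTop_add_const_left _ _
    (Filter.tendsto_id.atTop_mul_const (hmu i))).eventually_gt_atTop 0

lemma Submodule.finrank_eq_one_iff_le_span_singleton {K V : Type*} [DivisionRing K]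
    [AddCommGroup V] [Module K V] {S : Submodule K V} {v : V} (hv : v ∈ S) (hv0 : v ≠ 0) :
    Module.finrank K S = 1 ↔ S ≤ K ∙ v := by
  have hle : K ∙ v ≤ S := (Submodule.span_singleton_le_iff_mem v S).2 hv
  constructor
  · intro h
    have : FiniteDimensional K S := Module.finite_of_finrank_eq_succ h
    exact (Submodule.eq_of_le_of_finrank_eq hle (by rw [h, finrank_span_singleton hv0])).ge
  · intro h
    rw [le_antisymm h hle, finrank_span_singleton hv0]

section signColumns

variable {ι : Type*} (v : ι → ℂ)

/-- The map `λ ↦ dg(sign v)_{N(v)} λ`, with `λ` indexed by the support of `v`. -/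
noncomputable def signColumns : ({i // v i ≠ 0} → ℝ) →ₗ[ℝ] (ι → ℂ) where
  toFun lam i := if h : v i ≠ 0 then csign (v i) * (lam ⟨i, h⟩ : ℂ) else 0
  map_add' lam mu := by
    ext i
    by_cases h : v i = 0 <;> simp [h, mul_add]
  map_smul' c lam := by
    ext i
    by_cases h : v i = 0 <;> simp [h, Complex.real_smul, mul_left_comm]

lemma signColumns_apply (lam : {i // v i ≠ 0} → ℝ) (i : ι) :
    signColumns v lam i = if h : v i ≠ 0 then csign (v i) * (lam ⟨i, h⟩ : ℂ) else 0 :=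
  rfl

lemma signColumns_norm_of_csign_eq {w : ι → ℂ} (h : ∀ i, csign (w i) = csign (v i)) :
    signColumns v (fun k => ‖w k‖) = w := by
  ext i
  rw [signColumns_apply]
  split_ifs with hi
  · rw [← h i, csign_mul_norm]
  · rw [not_not, ← csign_eq_zero_iff, ← h i, csign_eq_zero_iff] at hi
    exact hi.symm

lemma signColumns_norm : signColumns v (fun k => ‖v k‖) = v :=
  signColumns_norm_of_csign_eq v fun _ => rfl

lemma signColumns_injective : Function.Injective (signColumns v) := by
  intro lam mu h
  ext k
  have hk := congrFun h k
  rw [signColumns_apply, signColumns_apply, dif_pos k.2, dif_pos k.2] at hk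
  exact_mod_cast mul_left_cancel₀ (csign_eq_zero_iff.not.2 k.2) hk

lemma csign_signColumns {lam : {i // v i ≠ 0} → ℝ} (hlam : ∀ k, 0 < lam k) (i : ι) :
    csign (signColumns v lam i) = csign (v i) := by
  rw [signColumns_apply]
  split_ifs with hi
  · rw [mul_comm, csign_ofReal_mul (hlam _), csign_csign]
  · rw [not_not.1 hi]

lemma norm_restrict_support_ne_zero {v : ι → ℂ} (hv : v ≠ 0) :
    (fun k : {i // v i ≠ 0} => ‖v k.1‖) ≠ 0 := by
  obtain ⟨i, hi⟩ := Function.ne_iff.1 hv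
  exact Function.ne_iff.2 ⟨⟨i, hi⟩, norm_ne_zero_iff.2 hi⟩

end signColumns

section signSubmodule

variable {m d : ℕ} (A : Matrix (Fin m) (Fin d) ℂ) (x : Fin d → ℂ)

noncomputable def signSubmodule : Submodule ℝ ({j // (A *ᵥ x) j ≠ 0} → ℝ) :=
  (LinearMap.range (A.mulVecLin.restrictScalars ℝ)).comap (signColumns (A *ᵥ x))

variable {A x}

lemma mem_signSubmodule {lam : {j // (A *ᵥ x) j ≠ 0} → ℝ} :
    lam ∈ signSubmodule A x ↔ ∃ y, A *ᵥ y = signColumns (A *ᵥ x) lam :=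
  Iff.rfl

variable (A x)

lemma coe_signSubmodule : (signSubmodule A x : Set _) = Vset A x := by
  ext lam
  exact mem_signSubmodule.trans (exists_congr fun y => funext_iff)

lemma norm_mulVec_mem_signSubmodule :
    (fun k : {j // (A *ᵥ x) j ≠ 0} => ‖(A *ᵥ x) k.1‖) ∈ signSubmodule A x :=
  mem_signSubmodule.2 ⟨x, (signColumns_norm _).symm⟩

variable {A x}

lemma signSubmodule_le_span_of_mem_Wset (hW : x ∈ Wset A) :
    signSubmodule A x ≤ ℝ ∙ fun k : {j // (A *ᵥ x) j ≠ 0} => ‖(A *ᵥ x) k.1‖ := by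
  intro lam hlam
  obtain ⟨y, hy⟩ := mem_signSubmodule.1 hlam
  set nx : {j // (A *ᵥ x) j ≠ 0} → ℝ := fun k => ‖(A *ᵥ x) k.1‖
  obtain ⟨t, ht⟩ := exists_forall_pos_add_mul lam nx fun k => norm_pos_iff.2 k.2
  have hAy' : A *ᵥ (y + (t : ℂ) • x) = signColumns (A *ᵥ x) (lam + t • nx) := by
    rw [mulVec_add, mulVec_smul, hy, map_add, map_smul, signColumns_norm, ← Complex.coe_smul]
  obtain ⟨s, hs, hxs⟩ := hW _ fun j => hAy' ▸ csign_signColumns _ (fun k => ht k) j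
  have hnx : nx = s • (lam + t • nx) := by
    apply signColumns_injective (A *ᵥ x)
    rw [signColumns_norm, map_smul, ← hAy', Complex.coe_smul, ← mulVec_smul]
    exact congrArg _ hxs
  have hlam_add : s⁻¹ • nx = lam + t • nx := by
    nth_rewrite 1 [hnx]
    rw [smul_smul, inv_mul_cancel₀ hs.ne', one_smul]
  refine Submodule.mem_span_singleton.2 ⟨s⁻¹ - t, ?_⟩
  rw [sub_smul, hlam_add, add_sub_cancel_right]

lemma mem_Wset_of_signSubmodule_le_span (hA : Function.Injective A.mulVec)
    (hx : A *ᵥ x ≠ 0)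
    (h : signSubmodule A x ≤ ℝ ∙ fun k : {j // (A *ᵥ x) j ≠ 0} => ‖(A *ᵥ x) k.1‖) :
    x ∈ Wset A := by
  intro y hsign
  have hAy := signColumns_norm_of_csign_eq (A *ᵥ x) hsign
  obtain ⟨c, hc⟩ := Submodule.mem_span_singleton.1 (h (mem_signSubmodule.2 ⟨y, hAy.symm⟩))
  obtain ⟨j, hj⟩ : ∃ j, (A *ᵥ x) j ≠ 0 := Function.ne_iff.1 hx
  have hc_pos : 0 < c := by
    have hyj : (A *ᵥ y) j ≠ 0 := by rwa [ne_eq, ← csign_eq_zero_iff, hsign, csign_eq_zero_iff]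
    have := congrFun hc ⟨j, hj⟩
    simp only [Pi.smul_apply, smul_eq_mul] at this
    exact pos_of_mul_pos_left (this ▸ norm_pos_iff.2 hyj) (norm_nonneg _)
  have hy : y = (c : ℂ) • x := by
    apply hA
    rw [← hAy, ← hc, map_smul, signColumns_norm, mulVec_smul, Complex.coe_smul]
  refine ⟨c⁻¹, inv_pos.2 hc_pos, ?_⟩
  ext k
  simp [hy, hc_pos.ne']

end signSubmodule

theorem stmt_5 (m d : ℕ) (A : Matrix (Fin m) (Fin d) ℂ) (hA : A.rank = d)
    (x : Fin d → ℂ) (hx : x ≠ 0) :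
    (∃ S : Submodule ℝ ({j : Fin m // A.mulVec x j ≠ 0} → ℝ),
        (S : Set ({j : Fin m // A.mulVec x j ≠ 0} → ℝ)) = Vset A x ∧
        (fun k : {j : Fin m // A.mulVec x j ≠ 0} => (‖A.mulVec x k.1‖ : ℝ)) ∈ S ∧
        (x ∈ Wset A ↔ Module.finrank ℝ S = 1)) := by
  have hinj := mulVec_injective_of_rank_eq (hA.trans (Fintype.card_fin d).symm)
  have hAx : A *ᵥ x ≠ 0 := fun h => hx (hinj (h.trans (mulVec_zero A).symm))
  refine ⟨signSubmodule A x, coe_signSubmodule A x, norm_mulVec_mem_signSubmodule A x, ?_⟩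
  rw [Submodule.finrank_eq_one_iff_le_span_singleton (norm_mulVec_mem_signSubmodule A x)
    (norm_restrict_support_ne_zero hAx)]
  exact ⟨signSubmodule_le_span_of_mem_Wset, mem_Wset_of_signSubmodule_le_span hinj hAx⟩
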